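/- Let U(x) = Σ_{k=1}^N Γ_k(y) w^k where Γ_1,…,Γ_N are C¹ scalar functions of the 2-plane radial variables y. Then curl U = Σ_{1 ≤ k < ℓ ≤ N} (∂_ℓΓ_k/y_ℓ − ∂_kΓ_ℓ/y_k)[w^k ⊗ w^ℓ − w^ℓ ⊗ w^k], and consequently curl U ≡ 0 if and only if ∂_ℓΓ_k/y_ℓ − ∂_kΓ_ℓ/y_k ≡ 0 for all 1 ≤ k < ℓ ≤ N. -/

import Mathlib

open scoped BigOperators
open Matrix

noncomputable section

/-- Partial derivative `∂g/∂x_j` of a scalar field on `ℝᵐ`. -/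
def pdx {m : ℕ} (g : (Fin m → ℝ) → ℝ) (x : Fin m → ℝ) (j : Fin m) : ℝ :=
  fderiv ℝ g x (Pi.single j 1)

/-- Gradient of a scalar field on `ℝᵐ`. -/
def gradx {m : ℕ} (g : (Fin m → ℝ) → ℝ) (x : Fin m → ℝ) : Fin m → ℝ :=
  fun j => pdx g x j

/-- Gradient matrix `∇u`, with entries `(∇u)_{ij} = ∂u_i/∂x_j`. -/
def gradm {n : ℕ} (u : (Fin n → ℝ) → Fin n → ℝ) (x : Fin n → ℝ) :
    Matrix (Fin n) (Fin n) ℝ :=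
  Matrix.of fun i j => pdx (fun z => u z i) x j

/-- Laplacian of a scalar field. -/
def lapx {m : ℕ} (g : (Fin m → ℝ) → ℝ) (x : Fin m → ℝ) : ℝ :=
  ∑ j, pdx (fun z => pdx g z j) x j

/-- Hessian matrix of a scalar field. -/
def hessx {m : ℕ} (g : (Fin m → ℝ) → ℝ) (x : Fin m → ℝ) : Matrix (Fin m) (Fin m) ℝ :=
  Matrix.of fun i j => pdx (fun z => pdx g z j) x i

/-- Componentwise Laplacian of a vector field. -/
def lapv {n : ℕ} (u : (Fin n → ℝ) → Fin n → ℝ) (x : Fin n → ℝ) : Fin n → ℝ :=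
  fun i => lapx (fun z => u z i) x

/-- Squared Euclidean norm of a vector. -/
def norm2 {m : ℕ} (v : Fin m → ℝ) : ℝ := ∑ i, v i ^ 2

/-- Euclidean norm of a vector. -/
def enr {m : ℕ} (v : Fin m → ℝ) : ℝ := Real.sqrt (norm2 v)

/-- Squared Frobenius norm of a matrix, `|E|² = tr (EᵗE)`. -/
def frob2 {n : ℕ} (M : Matrix (Fin n) (Fin n) ℝ) : ℝ := ∑ i, ∑ j, M i j ^ 2

/-- The 2-plane radial variables `y = (y_1, …, y_N)`, `N = ⌈n/2⌉` (0-indexed):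
`y_ℓ = √(x_{2ℓ}² + x_{2ℓ+1}²)` and, when `n` is odd, `y_{N-1} = x_{n-1}`. -/
def yvar {n : ℕ} (x : Fin n → ℝ) (ℓ : Fin ((n+1)/2)) : ℝ :=
  if h : 2 * (ℓ : ℕ) + 1 < n then
    Real.sqrt (x ⟨2*(ℓ:ℕ), by omega⟩ ^ 2 + x ⟨2*(ℓ:ℕ)+1, h⟩ ^ 2)
  else x ⟨n - 1, by have := ℓ.isLt; omega⟩

/-- The vector of 2-plane radial variables of `x`. -/
def yv {n : ℕ} (x : Fin n → ℝ) : Fin ((n+1)/2) → ℝ := fun ℓ => yvar x ℓ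

/-- Inclusion `Fin (n/2) → Fin ((n+1)/2)`, i.e. `d = ⌊n/2⌋` into `N = ⌈n/2⌉`. -/
def dIdx {n : ℕ} (i : Fin (n/2)) : Fin ((n+1)/2) := ⟨(i:ℕ), by have := i.isLt; omega⟩

/-- Partial derivative `∂_ℓ M` of a matrix field on `ℝᴺ`. -/
def pdM {n N : ℕ} (M : (Fin N → ℝ) → Matrix (Fin n) (Fin n) ℝ)
    (y : Fin N → ℝ) (ℓ : Fin N) : Matrix (Fin n) (Fin n) ℝ :=
  Matrix.of fun i j => pdx (fun z => M z i j) y ℓ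

/-- Second partial derivative `∂²_{ℓk} M` of a matrix field on `ℝᴺ`. -/
def pdM2 {n N : ℕ} (M : (Fin N → ℝ) → Matrix (Fin n) (Fin n) ℝ)
    (y : Fin N → ℝ) (ℓ k : Fin N) : Matrix (Fin n) (Fin n) ℝ :=
  Matrix.of fun i j => pdx (fun z => pdM M z ℓ i j) y k

/-- The block diagonal `SO(n)`-valued matrix field `Q[f]`, with `2×2` rotation blocks
`R[f_ℓ(y)]` (and an extra diagonal `1` when `n` is odd). -/
def Qf {n : ℕ} (f : (Fin ((n+1)/2) → ℝ) → Fin (n/2) → ℝ)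
    (y : Fin ((n+1)/2) → ℝ) : Matrix (Fin n) (Fin n) ℝ :=
  Matrix.of fun i j =>
    if h : (i:ℕ)/2 = (j:ℕ)/2 ∧ (i:ℕ)/2 < n/2 then
      (if (i:ℕ) % 2 = 0 then
        (if (j:ℕ) % 2 = 0 then Real.cos (f y ⟨(i:ℕ)/2, h.2⟩)
         else -Real.sin (f y ⟨(i:ℕ)/2, h.2⟩))
       else
        (if (j:ℕ) % 2 = 0 then Real.sin (f y ⟨(i:ℕ)/2, h.2⟩)
         else Real.cos (f y ⟨(i:ℕ)/2, h.2⟩)))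
    else (if i = j then 1 else 0)

/-- The block diagonal rotation matrix `exp(α𝐇) = diag(R[α], …, R[α])`
(an extra diagonal `1` when `n` is odd). -/
def rotM (n : ℕ) (α : ℝ) : Matrix (Fin n) (Fin n) ℝ :=
  Matrix.of fun i j =>
    if (i:ℕ)/2 = (j:ℕ)/2 ∧ (i:ℕ)/2 < n/2 then
      (if (i:ℕ) % 2 = 0 then
        (if (j:ℕ) % 2 = 0 then Real.cos α else -Real.sin α)
       else
        (if (j:ℕ) % 2 = 0 then Real.sin α else Real.cos α))
    else (if i = j then 1 else 0)

/-- The vector `w^k = (0, …, 0, x_{2k}, x_{2k+1}, 0, …, 0)`. -/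
def wv {n : ℕ} (x : Fin n → ℝ) (k : Fin ((n+1)/2)) : Fin n → ℝ :=
  fun j => if (j:ℕ)/2 = (k:ℕ) then x j else 0

/-- The vector `[w^k]^⊥ = (0, …, 0, -x_{2k+1}, x_{2k}, 0, …, 0)` (zero in the odd last slot). -/
def wperp {n : ℕ} (x : Fin n → ℝ) (k : Fin ((n+1)/2)) : Fin n → ℝ :=
  fun j =>
    if h : (j:ℕ)/2 = (k:ℕ) ∧ 2*(k:ℕ)+1 < n then
      (if (j:ℕ) % 2 = 0 then -x ⟨2*(k:ℕ)+1, h.2⟩ else x ⟨2*(k:ℕ), by omega⟩)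
    else 0

/-- The differential operator
`𝓛[u;A,B] = [∇u]ᵗ[∇u]∇A + A [∇u]ᵗΔu + B [∇u]ᵗu`, where `A, B` are evaluated at
`(|x|, |u|², |∇u|²)` and `∇A` is the spatial gradient of `x ↦ A(|x|,|u(x)|²,|∇u(x)|²)`. -/
def LAB {n : ℕ} (A B : ℝ → ℝ → ℝ → ℝ) (u : (Fin n → ℝ) → Fin n → ℝ)
    (x : Fin n → ℝ) : Fin n → ℝ :=
  ((gradm u x)ᵀ * gradm u x) *ᵥ
      gradx (fun z => A (enr z) (norm2 (u z)) (frob2 (gradm u z))) x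
    + A (enr x) (norm2 (u x)) (frob2 (gradm u x)) • ((gradm u x)ᵀ *ᵥ lapv u x)
    + B (enr x) (norm2 (u x)) (frob2 (gradm u x)) • ((gradm u x)ᵀ *ᵥ u x)

/-- The annulus `𝕏ₙ = {x : a < |x| < b}` in `ℝⁿ`. -/
def Xann (n : ℕ) (a b : ℝ) : Set (Fin n → ℝ) := {x | a < enr x ∧ enr x < b}

/-- The region `𝔸ₙ = {y : a < ‖y‖ < b}` (with the 2-plane radial coordinates positive). -/
def Ann (n : ℕ) (a b : ℝ) : Set (Fin ((n+1)/2) → ℝ) :=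
  {y | a < enr y ∧ enr y < b ∧ ∀ ℓ : Fin ((n+1)/2), 2*(ℓ:ℕ)+1 < n → 0 < y ℓ}

/-- `𝒥(y) = y_1 ⋯ y_d`. -/
def Jac (n : ℕ) (y : Fin ((n+1)/2) → ℝ) : ℝ :=
  ∏ ℓ : Fin ((n+1)/2), if 2*(ℓ:ℕ)+1 < n then y ℓ else 1

/-- The argument `ξ = n + Σ_j y_j² |∇f_j|²`. -/
def xiArg (n : ℕ) (f : (Fin ((n+1)/2) → ℝ) → Fin (n/2) → ℝ)
    (y : Fin ((n+1)/2) → ℝ) : ℝ :=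
  (n : ℝ) + ∑ j : Fin (n/2), (y (dIdx j))^2 * norm2 (gradx (fun z => f z j) y)

/-- The coefficients `𝒜_i(y,∇f) = y_i² A(z, z², n + Σ_j y_j²|∇f_j|²) 𝒥(y)`, `z = ‖y‖`. -/
def coefA (n : ℕ) (A : ℝ → ℝ → ℝ → ℝ) (f : (Fin ((n+1)/2) → ℝ) → Fin (n/2) → ℝ)
    (i : Fin (n/2)) (y : Fin ((n+1)/2) → ℝ) : ℝ :=
  (y (dIdx i))^2 * A (enr y) ((enr y)^2) (xiArg n f y) * Jac n y

/-- `div [𝒜_i(y,∇f) ∇f_i]`, divergence taken in the `y` variables. -/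
def divA (n : ℕ) (A : ℝ → ℝ → ℝ → ℝ) (f : (Fin ((n+1)/2) → ℝ) → Fin (n/2) → ℝ)
    (i : Fin (n/2)) (y : Fin ((n+1)/2) → ℝ) : ℝ :=
  ∑ k, pdx (fun z => coefA n A f i z * pdx (fun w => f w i) z k) y k

/-- The curl of a vector field, `[curl U]_{ij} = ∂_j U_i − ∂_i U_j`. -/
def curlm {n : ℕ} (U : (Fin n → ℝ) → Fin n → ℝ) (x : Fin n → ℝ) :
    Matrix (Fin n) (Fin n) ℝ :=
  Matrix.of fun i j => pdx (fun z => U z i) x j - pdx (fun z => U z j) x i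

end

/-!
Coordinate `i` of `U` is `Γ_{p(i)}(y) x_i`, where `p(i) = ⌊i/2⌋` is the plane containing it,
and `∂y_ℓ/∂x_j = x_j/y_ℓ` if `p(j) = ℓ` and `0` otherwise. Hence
`∂_j U_i = Γ_{p(i)} δ_{ij} + x_i x_j ∂_{p(j)}Γ_{p(i)}/y_{p(j)}`, so
`[curl U]_{ij} = c_{p(i)p(j)} x_i x_j` with `c_{kℓ} = ∂_ℓΓ_k/y_ℓ − ∂_kΓ_ℓ/y_k`. This is the
`(i, j)` entry of `Σ_{k,ℓ} c_{kℓ} w^k ⊗ w^ℓ`, and the skew-symmetry of `c` folds that sum into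
the one over `k < ℓ`. For the equivalence, every `y` with positive entries is the radial vector
of `x = (y_1, 0, y_2, 0, …)`, and the `(2k, 2ℓ)` entry of the curl at that point is
`c_{kℓ} y_k y_ℓ`.
-/

theorem Finset.sum_sum_ite_lt_smul_sub_swap {ι R M : Type*} [Fintype ι] [LinearOrder ι] [Ring R]
    [AddCommGroup M] [Module R M] (c : ι → ι → R) (A : ι → ι → M)
    (hskew : ∀ k ℓ, c ℓ k = -c k ℓ) (hdiag : ∀ k, c k k = 0) :
    ∑ k, ∑ ℓ, (if k < ℓ then c k ℓ • (A k ℓ - A ℓ k) else 0)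
      = ∑ k, ∑ ℓ, c k ℓ • A k ℓ := by
  have hswap : ∑ k, ∑ ℓ, (if ℓ < k then c k ℓ • A k ℓ else 0)
      = -∑ k, ∑ ℓ, (if k < ℓ then c k ℓ • A ℓ k else 0) := by
    rw [Finset.sum_comm, ← Finset.sum_neg_distrib]
    refine Finset.sum_congr rfl fun k _ => ?_
    rw [← Finset.sum_neg_distrib]
    refine Finset.sum_congr rfl fun ℓ _ => ?_
    rw [hskew, neg_smul]
    split_ifs <;> simp
  calc ∑ k, ∑ ℓ, (if k < ℓ then c k ℓ • (A k ℓ - A ℓ k) else 0)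
      = ∑ k, ∑ ℓ, (if k < ℓ then c k ℓ • A k ℓ else 0)
          - ∑ k, ∑ ℓ, (if k < ℓ then c k ℓ • A ℓ k else 0) := by
        simp only [← Finset.sum_sub_distrib, smul_sub, ite_sub_ite, sub_zero]
    _ = ∑ k, ∑ ℓ, ((if k < ℓ then c k ℓ • A k ℓ else 0)
          + (if ℓ < k then c k ℓ • A k ℓ else 0)) := by
        rw [Finset.sum_congr rfl fun k _ => Finset.sum_add_distrib, Finset.sum_add_distrib, hswap,
          sub_eq_add_neg]
    _ = ∑ k, ∑ ℓ, c k ℓ • A k ℓ := by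
        refine Finset.sum_congr rfl fun k _ => Finset.sum_congr rfl fun ℓ _ => ?_
        rcases lt_trichotomy k ℓ with h | rfl | h
        · simp [h, h.not_gt]
        · simp [hdiag]
        · simp [h, h.not_gt]

section PartialDerivatives

variable {m : ℕ} {x : Fin m → ℝ}

lemma pdx_apply (i j : Fin m) :
    pdx (fun z => z i) x j = if i = j then 1 else 0 := by
  rw [pdx, (hasFDerivAt_apply i x).fderiv, ContinuousLinearMap.proj_apply, Pi.single_apply]

lemma pdx_mul {f g : (Fin m → ℝ) → ℝ} (hf : DifferentiableAt ℝ f x)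
    (hg : DifferentiableAt ℝ g x) (j : Fin m) :
    pdx (fun z => f z * g z) x j = pdx f x j * g x + f x * pdx g x j := by
  simp only [pdx, fderiv_fun_mul hf hg, _root_.add_apply, _root_.smul_apply, smul_eq_mul]
  ring

lemma pdx_sqrt_sum_sq (S : Finset (Fin m)) (hx : 0 < ∑ i ∈ S, x i ^ 2) (j : Fin m) :
    pdx (fun z => √(∑ i ∈ S, z i ^ 2)) x j
      = (if j ∈ S then x j else 0) / √(∑ i ∈ S, x i ^ 2) := by
  have hsum := HasFDerivAt.fun_sum (u := S) (A := fun i (z : Fin m → ℝ) => z i ^ 2)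
    fun i _ => (hasFDerivAt_apply (𝕜 := ℝ) i x).pow 2
  rw [pdx, (hsum.sqrt hx.ne').fderiv]
  simp only [_root_.smul_apply, _root_.sum_apply, ContinuousLinearMap.proj_apply,
    Pi.single_apply, smul_eq_mul, mul_ite, mul_one, mul_zero, Finset.sum_ite_eq']
  split_ifs <;> ring

end PartialDerivatives

section RadialVariables

variable {n : ℕ}

def planeIdx (i : Fin n) : Fin ((n+1)/2) := ⟨(i : ℕ) / 2, by omega⟩

lemma planeIdx_eq_of_val_eq {i : Fin n} {ℓ : Fin ((n+1)/2)} (hi : (i : ℕ) = 2 * ℓ) :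
    planeIdx i = ℓ :=
  Fin.ext (by simp [planeIdx, hi])

lemma wv_apply (x : Fin n → ℝ) (k : Fin ((n+1)/2)) (j : Fin n) :
    wv x k j = if planeIdx j = k then x j else 0 := by
  simp [wv, planeIdx, Fin.ext_iff]

lemma sum_smul_wv_apply (c : Fin ((n+1)/2) → ℝ) (x : Fin n → ℝ) (i : Fin n) :
    (∑ k, c k • wv x k) i = c (planeIdx i) * x i := by
  simp [Finset.sum_apply, wv_apply]

lemma sum_smul_vecMulVec_wv_apply (c : Fin ((n+1)/2) → Fin ((n+1)/2) → ℝ)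
    (x : Fin n → ℝ) (i j : Fin n) :
    (∑ k, ∑ ℓ, c k ℓ • vecMulVec (wv x k) (wv x ℓ)) i j
      = c (planeIdx i) (planeIdx j) * (x i * x j) := by
  simp [Matrix.sum_apply, vecMulVec_apply, wv_apply, ite_mul, mul_ite]

lemma yvar_sq (x : Fin n → ℝ) (ℓ : Fin ((n+1)/2)) :
    yvar x ℓ ^ 2 = ∑ i with planeIdx i = ℓ, x i ^ 2 := by
  unfold yvar
  split_ifs with h
  · rw [Real.sq_sqrt (by positivity)]
    have hfiber : ({i | planeIdx i = ℓ} : Finset (Fin n))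
        = {⟨2 * ℓ, by omega⟩, ⟨2 * ℓ + 1, h⟩} := by
      ext i
      simp only [planeIdx, Fin.ext_iff, Finset.mem_filter, Finset.mem_univ, true_and,
        Finset.mem_insert, Finset.mem_singleton]
      omega
    rw [hfiber, Finset.sum_pair (by simp [Fin.ext_iff])]
  · have hfiber : ({i | planeIdx i = ℓ} : Finset (Fin n)) = {⟨n - 1, by omega⟩} := by
      ext i
      simp only [planeIdx, Fin.ext_iff, Finset.mem_filter, Finset.mem_univ, true_and,
        Finset.mem_singleton]
      omega
    rw [hfiber, Finset.sum_singleton]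

lemma norm2_yv (x : Fin n → ℝ) : norm2 (yv x) = norm2 x := by
  simp only [norm2, yv, yvar_sq, Finset.sum_fiberwise]

lemma enr_yv (x : Fin n → ℝ) : enr (yv x) = enr x := by
  rw [enr, enr, norm2_yv]

lemma continuous_yvar (ℓ : Fin ((n+1)/2)) : Continuous fun x : Fin n → ℝ => yvar x ℓ := by
  unfold yvar
  split_ifs <;> fun_prop

variable {x : Fin n → ℝ}

open Filter Topology in
-- In the odd slot `yvar` is the signed coordinate `x_{n-1}`, so this needs `0 < yvar x ℓ`.
lemma yvar_eventuallyEq_sqrt {ℓ : Fin ((n+1)/2)} (hx : 0 < yvar x ℓ) :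
    (fun z => yvar z ℓ) =ᶠ[𝓝 x] fun z => √(∑ i with planeIdx i = ℓ, z i ^ 2) := by
  filter_upwards [continuousAt_const.eventually_lt (continuous_yvar ℓ).continuousAt hx] with z hz
  rw [← yvar_sq, Real.sqrt_sq hz.le]

lemma differentiableAt_yvar {ℓ : Fin ((n+1)/2)} (hx : 0 < yvar x ℓ) :
    DifferentiableAt ℝ (fun z => yvar z ℓ) x := by
  rw [(yvar_eventuallyEq_sqrt hx).differentiableAt_iff]
  refine DifferentiableAt.sqrt (by fun_prop) ?_
  rw [← yvar_sq]
  positivity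

lemma pdx_yvar {ℓ : Fin ((n+1)/2)} (hx : 0 < yvar x ℓ) (j : Fin n) :
    pdx (fun z => yvar z ℓ) x j = if planeIdx j = ℓ then x j / yvar x ℓ else 0 := by
  have hpos : 0 < ∑ i with planeIdx i = ℓ, x i ^ 2 := by rw [← yvar_sq]; positivity
  rw [pdx, (yvar_eventuallyEq_sqrt hx).fderiv_eq, ← pdx, pdx_sqrt_sum_sq _ hpos, ← yvar_sq,
    Real.sqrt_sq hx.le]
  simp only [Finset.mem_filter, Finset.mem_univ, true_and]
  split_ifs <;> simp

lemma differentiableAt_yv (hx : ∀ ℓ, 0 < yvar x ℓ) : DifferentiableAt ℝ yv x :=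
  differentiableAt_pi.mpr fun ℓ => differentiableAt_yvar (hx ℓ)

lemma fderiv_yv_single (hx : ∀ ℓ, 0 < yvar x ℓ) (j : Fin n) :
    fderiv ℝ yv x (Pi.single j 1) = (x j / yvar x (planeIdx j)) • Pi.single (planeIdx j) 1 := by
  ext ℓ
  rw [show yv = fun z ℓ => yvar z ℓ from rfl,
    fderiv_pi fun ℓ => differentiableAt_yvar (hx ℓ)]
  change pdx (fun z => yvar z ℓ) x j = _
  rw [pdx_yvar (hx ℓ)]
  simp only [Pi.smul_apply, Pi.single_apply, smul_eq_mul, mul_ite, mul_one, mul_zero]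
  by_cases h : ℓ = planeIdx j
  · simp [h]
  · simp [h, Ne.symm h]

lemma pdx_comp_yv {g : (Fin ((n+1)/2) → ℝ) → ℝ} (hx : ∀ ℓ, 0 < yvar x ℓ)
    (hg : DifferentiableAt ℝ g (yv x)) (j : Fin n) :
    pdx (fun z => g (yv z)) x j = x j / yvar x (planeIdx j) * pdx g (yv x) (planeIdx j) := by
  rw [pdx, fderiv_fun_comp x hg (differentiableAt_yv hx), ContinuousLinearMap.comp_apply,
    fderiv_yv_single hx, map_smul, smul_eq_mul, pdx]

def planeLift (y : Fin ((n+1)/2) → ℝ) : Fin n → ℝ :=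
  fun i => if (i : ℕ) % 2 = 0 then y (planeIdx i) else 0

lemma planeLift_apply (y : Fin ((n+1)/2) → ℝ) {ℓ : Fin ((n+1)/2)} {i : Fin n}
    (hi : (i : ℕ) = 2 * ℓ) : planeLift y i = y ℓ := by
  rw [planeLift, if_pos (by omega), planeIdx_eq_of_val_eq hi]

lemma yv_planeLift {y : Fin ((n+1)/2) → ℝ} (hy : ∀ ℓ, 0 ≤ y ℓ) :
    yv (planeLift (n := n) y) = y := by
  funext ℓ
  have := ℓ.isLt
  rw [yv, yvar]
  split_ifs with h
  · rw [planeLift_apply y rfl, planeLift, if_neg (by simp), zero_pow two_ne_zero, add_zero,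
      Real.sqrt_sq (hy ℓ)]
  · exact planeLift_apply y (by dsimp only; omega)

end RadialVariables

section CurlCoeff

variable {N : ℕ} (Γ : Fin N → (Fin N → ℝ) → ℝ) (y : Fin N → ℝ)

noncomputable def curlCoeff (k ℓ : Fin N) : ℝ :=
  pdx (Γ k) y ℓ / y ℓ - pdx (Γ ℓ) y k / y k

lemma curlCoeff_swap (k ℓ : Fin N) : curlCoeff Γ y ℓ k = -curlCoeff Γ y k ℓ := by
  rw [curlCoeff, curlCoeff, neg_sub]

lemma curlCoeff_self (k : Fin N) : curlCoeff Γ y k k = 0 :=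
  sub_self _

end CurlCoeff

section Curl

variable {n : ℕ} {Γ : Fin ((n+1)/2) → (Fin ((n+1)/2) → ℝ) → ℝ} {x : Fin n → ℝ}

lemma pdx_radialField_apply (hx : ∀ ℓ, 0 < yvar x ℓ)
    (hΓ : ∀ k, DifferentiableAt ℝ (Γ k) (yv x)) (i j : Fin n) :
    pdx (fun z => (∑ k, Γ k (yv z) • wv z k) i) x j
      = pdx (Γ (planeIdx i)) (yv x) (planeIdx j) / yvar x (planeIdx j) * (x i * x j)
        + Γ (planeIdx i) (yv x) * (if i = j then 1 else 0) := by
  simp only [sum_smul_wv_apply]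
  rw [pdx_mul (f := fun z => Γ (planeIdx i) (yv z)) ((hΓ _).comp x (differentiableAt_yv hx))
    (differentiableAt_apply i x), pdx_comp_yv hx (hΓ _), pdx_apply]
  ring

lemma curlm_radialField_apply (hx : ∀ ℓ, 0 < yvar x ℓ)
    (hΓ : ∀ k, DifferentiableAt ℝ (Γ k) (yv x)) (i j : Fin n) :
    curlm (fun z => ∑ k, Γ k (yv z) • wv z k) x i j
      = curlCoeff Γ (yv x) (planeIdx i) (planeIdx j) * (x i * x j) := by
  rw [curlm, Matrix.of_apply, pdx_radialField_apply hx hΓ, pdx_radialField_apply hx hΓ, curlCoeff]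
  rcases eq_or_ne i j with rfl | hij
  · simp [yv]
  · simp only [if_neg hij, if_neg hij.symm, yv]
    ring

lemma curlm_radialField_eq_sum_lt (hx : ∀ ℓ, 0 < yvar x ℓ)
    (hΓ : ∀ k, DifferentiableAt ℝ (Γ k) (yv x)) :
    curlm (fun z => ∑ k, Γ k (yv z) • wv z k) x = ∑ k, ∑ ℓ, if k < ℓ then
      curlCoeff Γ (yv x) k ℓ • (vecMulVec (wv x k) (wv x ℓ) - vecMulVec (wv x ℓ) (wv x k))
      else 0 := by
  rw [Finset.sum_sum_ite_lt_smul_sub_swap _ _ (curlCoeff_swap Γ _) (curlCoeff_self Γ _)]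
  ext i j
  rw [curlm_radialField_apply hx hΓ, sum_smul_vecMulVec_wv_apply]

lemma curlCoeff_eq_zero_of_curlm_planeLift {y : Fin ((n+1)/2) → ℝ} (hy : ∀ ℓ, 0 < y ℓ)
    (hΓ : ∀ k, DifferentiableAt ℝ (Γ k) y)
    (h0 : curlm (fun z => ∑ k, Γ k (yv z) • wv z k) (planeLift (n := n) y) = 0)
    (k ℓ : Fin ((n+1)/2)) : curlCoeff Γ y k ℓ = 0 := by
  have hyx : yv (planeLift (n := n) y) = y := yv_planeLift fun ℓ => (hy ℓ).le
  have hpos (ℓ) : 0 < yvar (planeLift (n := n) y) ℓ := by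
    change 0 < yv (planeLift y) ℓ
    rw [hyx]
    exact hy ℓ
  have hentry := congrFun (congrFun h0 ⟨2 * k, by omega⟩) ⟨2 * ℓ, by omega⟩
  rw [curlm_radialField_apply hpos (by rwa [hyx]), planeLift_apply y rfl,
    planeLift_apply y rfl, hyx, planeIdx_eq_of_val_eq rfl, planeIdx_eq_of_val_eq rfl,
    Matrix.zero_apply] at hentry
  exact (mul_eq_zero.mp hentry).resolve_right (mul_pos (hy k) (hy ℓ)).ne'

end Curl

theorem stmt14_general (n : ℕ) (a b : ℝ)
    (Γ : Fin ((n+1)/2) → (Fin ((n+1)/2) → ℝ) → ℝ)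
    (hΓ : ∀ k, ContDiff ℝ 1 (Γ k)) :
    let U : (Fin n → ℝ) → Fin n → ℝ := fun z => ∑ k, Γ k (yv z) • wv z k
    let P : Set (Fin n → ℝ) :=
      {x | a < enr x ∧ enr x < b ∧ ∀ ℓ : Fin ((n+1)/2), 0 < yvar x ℓ}
    (∀ x ∈ P, curlm U x
      = ∑ k : Fin ((n+1)/2), ∑ ℓ : Fin ((n+1)/2), if (k:ℕ) < (ℓ:ℕ) then
          (pdx (Γ k) (yv x) ℓ / yvar x ℓ - pdx (Γ ℓ) (yv x) k / yvar x k) •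
            (vecMulVec (wv x k) (wv x ℓ) - vecMulVec (wv x ℓ) (wv x k))
        else 0) ∧
    ((∀ x ∈ P, curlm U x = 0) ↔
      (∀ y : Fin ((n+1)/2) → ℝ,
        (a < enr y ∧ enr y < b ∧ ∀ ℓ, 0 < y ℓ) →
        ∀ k ℓ : Fin ((n+1)/2), (k:ℕ) < (ℓ:ℕ) →
          pdx (Γ k) y ℓ / y ℓ - pdx (Γ ℓ) y k / y k = 0)) := by
  intro U P
  have hΓd (y : Fin ((n+1)/2) → ℝ) k : DifferentiableAt ℝ (Γ k) y :=
    (hΓ k).differentiable one_ne_zero y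
  have hformula (x) (hx : x ∈ P) := curlm_radialField_eq_sum_lt hx.2.2 fun k => hΓd (yv x) k
  refine ⟨hformula, fun h0 y hy k ℓ _ => ?_, fun hc x hx => ?_⟩
  · have hyx : yv (planeLift (n := n) y) = y := yv_planeLift fun ℓ => (hy.2.2 ℓ).le
    have hxP : planeLift y ∈ P := by
      rw [← hyx] at hy
      exact ⟨enr_yv (planeLift y) ▸ hy.1, enr_yv (planeLift y) ▸ hy.2.1, hy.2.2⟩
    exact curlCoeff_eq_zero_of_curlm_planeLift hy.2.2 (hΓd y) (h0 _ hxP) k ℓ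
  · have hy : a < enr (yv x) ∧ enr (yv x) < b ∧ ∀ ℓ, 0 < yv x ℓ := by
      rw [enr_yv]
      exact hx
    rw [hformula x hx]
    refine Finset.sum_eq_zero fun k _ => Finset.sum_eq_zero fun ℓ _ => ?_
    split_ifs with hkℓ
    · rw [show curlCoeff Γ (yv x) k ℓ = 0 from hc (yv x) hy k ℓ hkℓ, zero_smul]
    · rfl

/-- Remark 4.6: for `U(x) = Σ_k Γ_k(y) w^k` with scalar `C¹`
coefficients `Γ_k` of the 2-plane radial variables,
`curl U = Σ_{k<ℓ} (∂_ℓΓ_k/y_ℓ − ∂_kΓ_ℓ/y_k)[w^k ⊗ w^ℓ − w^ℓ ⊗ w^k]`, and consequently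
`curl U ≡ 0` iff `∂_ℓΓ_k/y_ℓ − ∂_kΓ_ℓ/y_k ≡ 0` for all `k < ℓ`. -/
theorem stmt14 (n : ℕ) (hn : 2 ≤ n) (a b : ℝ) (ha : 0 < a) (hab : a < b)
    (Γ : Fin ((n+1)/2) → (Fin ((n+1)/2) → ℝ) → ℝ)
    (hΓ : ∀ k, ContDiff ℝ 1 (Γ k)) :
    let U : (Fin n → ℝ) → Fin n → ℝ := fun z => ∑ k, Γ k (yv z) • wv z k
    let P : Set (Fin n → ℝ) :=
      {x | a < enr x ∧ enr x < b ∧ ∀ ℓ : Fin ((n+1)/2), 0 < yvar x ℓ}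
    (∀ x ∈ P, curlm U x
      = ∑ k : Fin ((n+1)/2), ∑ ℓ : Fin ((n+1)/2), if (k:ℕ) < (ℓ:ℕ) then
          (pdx (Γ k) (yv x) ℓ / yvar x ℓ - pdx (Γ ℓ) (yv x) k / yvar x k) •
            (vecMulVec (wv x k) (wv x ℓ) - vecMulVec (wv x ℓ) (wv x k))
        else 0) ∧
    ((∀ x ∈ P, curlm U x = 0) ↔
      (∀ y : Fin ((n+1)/2) → ℝ,
        (a < enr y ∧ enr y < b ∧ ∀ ℓ, 0 < y ℓ) →
        ∀ k ℓ : Fin ((n+1)/2), (k:ℕ) < (ℓ:ℕ) →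
          pdx (Γ k) y ℓ / y ℓ - pdx (Γ ℓ) y k / y k = 0)) :=
  stmt14_general n a b Γ hΓ
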